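/- arXiv:2011.03648 — 2 statements merged into one kernel-verified Lean document; each statement's English description precedes it below -/
import Mathlib

section
/- Let λ > 0, let q, q_d : ℝ → Quaternion ℝ be differentiable unit-quaternion trajectories, with q satisfying q'(t) = (1/2) · q(t) * ⟦ω(t)⟧, and suppose q°(t) ≠ 0 so that T(q(t)) = q°(t)·I + [q⃗(t)]× is invertible. Define q̃(t) = q⃗(t) − q⃗_d(t), and suppose the sliding condition s' = 0 holds, i.e. ω(t) = 2·T(q(t))⁻¹·(q⃗_d)'(t) − λ·q̃(t). Then q̃'(t) = −(λ/2)·T(q(t))·q̃(t). -/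
noncomputable section

open Matrix

/-- The vector (imaginary) part of a quaternion. -/
def vecPart (p : Quaternion ℝ) : Fin 3 → ℝ := ![p.imI, p.imJ, p.imK]

/-- The pure-imaginary quaternion `⟦v⟧` with vector part `v`. -/
def quatOfVec (v : Fin 3 → ℝ) : Quaternion ℝ := ⟨0, v 0, v 1, v 2⟩

/-- The skew-symmetric matrix `[u]×` with `[u]× w = u × w`. -/
def skewMat (u : Fin 3 → ℝ) : Matrix (Fin 3) (Fin 3) ℝ :=
  !![0, -u 2, u 1; u 2, 0, -u 0; -u 1, u 0, 0]

/-- `T(q) = q° I + [q⃗]×`. -/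
def Tmat (p : Quaternion ℝ) : Matrix (Fin 3) (Fin 3) ℝ :=
  p.re • (1 : Matrix (Fin 3) (Fin 3) ℝ) + skewMat (vecPart p)

/-!
The kinematics `q' = ½ q ⟦ω⟧` give `(q⃗)' = ½ T(q) ω`, since `vecPart (p * ⟦v⟧) = T(p) v`.
Substituting the sliding law for `ω`, the product `T(q) T(q)⁻¹` cancels against `(q⃗_d)'`, leaving
`q̃' = −(λ/2) T(q) q̃`. The inverse is genuine because `det T(p) = p° |p|²`, nonzero when `p° ≠ 0`.
-/

lemma vecPart_mul_quatOfVec (p : Quaternion ℝ) (v : Fin 3 → ℝ) :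
    vecPart (p * quatOfVec v) = Tmat p *ᵥ v := by
  funext i
  fin_cases i <;>
    simp [vecPart, quatOfVec, Tmat, skewMat, ↓Quaternion.imI_mul, ↓Quaternion.imJ_mul,
      ↓Quaternion.imK_mul, mulVec, dotProduct, Fin.sum_univ_three, Matrix.one_apply] <;> ring

lemma det_Tmat (p : Quaternion ℝ) : (Tmat p).det = p.re * Quaternion.normSq p := by
  simp [Tmat, skewMat, vecPart, det_fin_three, Quaternion.normSq_def']
  ring

lemma Tmat_mul_inv {p : Quaternion ℝ} (hre : p.re ≠ 0) : Tmat p * (Tmat p)⁻¹ = 1 := by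
  have hp : p ≠ 0 := by rintro rfl; exact hre rfl
  refine Matrix.mul_nonsing_inv _ ?_
  rw [det_Tmat, isUnit_iff_ne_zero]
  exact mul_ne_zero hre (Quaternion.normSq_ne_zero.mpr hp)

def vecPartₗ : Quaternion ℝ →ₗ[ℝ] Fin 3 → ℝ where
  toFun := vecPart
  map_add' p q := by funext i; fin_cases i <;> simp [vecPart]
  map_smul' c p := by funext i; fin_cases i <;> simp [vecPart]

lemma HasDerivAt.vecPart {f : ℝ → Quaternion ℝ} {f' : Quaternion ℝ} {t : ℝ}
    (hf : HasDerivAt f f' t) : HasDerivAt (fun τ => vecPart (f τ)) (vecPart f') t :=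
  (LinearMap.toContinuousLinearMap vecPartₗ).hasFDerivAt.comp_hasDerivAt t hf

lemma hasDerivAt_vecPart_of_kinematics {q : ℝ → Quaternion ℝ} {ω : Fin 3 → ℝ} {t : ℝ}
    (hq : HasDerivAt q ((1 / 2 : ℝ) • (q t * quatOfVec ω)) t) :
    HasDerivAt (fun τ => vecPart (q τ)) ((1 / 2 : ℝ) • (Tmat (q t) *ᵥ ω)) t := by
  simpa [← vecPart_mul_quatOfVec, vecPartₗ] using
    hq.vecPart.congr_deriv (vecPartₗ.map_smul _ _)

lemma Tmat_mulVec_sliding {p : Quaternion ℝ} (hre : p.re ≠ 0) (lam : ℝ) (D e : Fin 3 → ℝ) :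
    Tmat p *ᵥ ((2 : ℝ) • ((Tmat p)⁻¹ *ᵥ D) - lam • e) = (2 : ℝ) • D - lam • (Tmat p *ᵥ e) := by
  rw [mulVec_sub, mulVec_smul, mulVec_smul, mulVec_mulVec, Tmat_mul_inv hre, one_mulVec]

theorem euclidean_difference_sliding_error_dynamics_general
    (lam : ℝ)
    (q qd : ℝ → Quaternion ℝ) (ω : ℝ → Fin 3 → ℝ)
    (hq : Differentiable ℝ q) (hqd : Differentiable ℝ qd)
    (hkin : ∀ t : ℝ, deriv q t = (1 / 2 : ℝ) • (q t * quatOfVec (ω t)))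
    (hre : ∀ t : ℝ, (q t).re ≠ 0)
    (hslide : ∀ t : ℝ, ω t =
      (2 : ℝ) • ((Tmat (q t))⁻¹ *ᵥ deriv (fun τ => vecPart (qd τ)) t) -
        lam • (vecPart (q t) - vecPart (qd t))) :
    ∀ t : ℝ, HasDerivAt (fun τ => vecPart (q τ) - vecPart (qd τ))
      ((-(lam / 2)) • (Tmat (q t) *ᵥ (vecPart (q t) - vecPart (qd t)))) t := by
  intro t
  have hdq : HasDerivAt (fun τ => vecPart (q τ)) ((1 / 2 : ℝ) • (Tmat (q t) *ᵥ ω t)) t :=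
    hasDerivAt_vecPart_of_kinematics (hkin t ▸ (hq t).hasDerivAt)
  have hdqd : HasDerivAt (fun τ => vecPart (qd τ)) (deriv (fun τ => vecPart (qd τ)) t) t :=
    (hqd t).hasDerivAt.vecPart.differentiableAt.hasDerivAt
  refine (hdq.sub hdqd).congr_deriv ?_
  rw [hslide t, Tmat_mulVec_sliding (hre t)]
  module

theorem euclidean_difference_sliding_error_dynamics
    (lam : ℝ) (hlam : 0 < lam)
    (q qd : ℝ → Quaternion ℝ) (ω : ℝ → Fin 3 → ℝ)
    (hq : Differentiable ℝ q) (hqd : Differentiable ℝ qd)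
    (hunit : ∀ t : ℝ, ‖q t‖ = 1) (hunitd : ∀ t : ℝ, ‖qd t‖ = 1)
    (hkin : ∀ t : ℝ, deriv q t = (1 / 2 : ℝ) • (q t * quatOfVec (ω t)))
    (hre : ∀ t : ℝ, (q t).re ≠ 0)
    (hslide : ∀ t : ℝ, ω t =
      (2 : ℝ) • ((Tmat (q t))⁻¹ *ᵥ deriv (fun τ => vecPart (qd τ)) t) -
        lam • (vecPart (q t) - vecPart (qd t))) :
    ∀ t : ℝ, HasDerivAt (fun τ => vecPart (q τ) - vecPart (qd τ))
      ((-(lam / 2)) • (Tmat (q t) *ᵥ (vecPart (q t) - vecPart (qd t)))) t :=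
  euclidean_difference_sliding_error_dynamics_general lam q qd ω hq hqd hkin hre hslide
end
end

section
/- (Theorem 2, key differential inequality.) Let J = Ĵ + J̃ be a symmetric positive-definite 3×3 real matrix with |J̃ᵢⱼ| ≤ 𝒥ᵢⱼ entrywise; let λ > 0, Φ ∈ ℝ³ with Φᵢ > 0, ηᵢ > 0. Let ω, ω_d : ℝ → ℝ³ be differentiable, f = f̂ + f̃ and d : ℝ → ℝ³ with |f̃(t)| ≤ ℱ(t) and |d(t)| ≤ D componentwise. Let q_e : ℝ → Quaternion ℝ be differentiable with ‖q_e(t)‖ = 1 and q_e'(t) = (1/2) q_e(t) * ⟦ω(t) − ω_d(t)⟧, and set s = ω − ω_d + λ sgn₊(q_e°) q⃗_e and s_Δ,ᵢ = sᵢ − Φᵢ · sat(sᵢ/Φᵢ). Fix t with q_e°(t) ≠ 0 and |sᵢ(t)| > Φᵢ for every i, suppose the dynamics J ω' = −ω × (J ω) + f + M_b + d hold on a neighborhood of t with the boundary-layer control law M_b = Ĵ ω_d' + ω × (Ĵ ω) − f̂ − λ sgn₊(q_e°) Ĵ (q⃗_e)' − K∘sat(s/Φ) (sat taken componentwise), and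 suppose the robust gains satisfy kᵢ ≥ |ω × (J̃ ω)|ᵢ + (𝒥 · |ω_d' − λ sgn₊(q_e°)(q⃗_e)'|)ᵢ + ℱᵢ(t) + Dᵢ + ηᵢ at time t. Then V(t) = s_Δ(t)ᵀ J s_Δ(t) is differentiable at t with V'(t) ≤ −2 Σᵢ ηᵢ |s_Δ,ᵢ(t)|. -/
noncomputable section

open Matrix Filter Topology

/-- `sgn₊ x = 1` if `x ≥ 0` and `-1` if `x < 0`. -/
def sgnPlus (x : ℝ) : ℝ := if 0 ≤ x then 1 else -1

/-- The saturation function: `sat x = x` for `|x| ≤ 1` and `sat x = sign x` otherwise. -/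
def sat (x : ℝ) : ℝ := max (-1) (min 1 x)

/-!
Outside the boundary layer `sat (sᵢ / Φᵢ)` is locally constant, and so is `sgn₊ (q_e°)` near a
time where `q_e° ≠ 0`; hence near `t` the vector `s_Δ` differs from a smooth function by a
constant, and `s_Δ' = s' = ω' - ω_d' + λ sgn₊(q_e°) q⃗_e'`. By symmetry of `J`,
`V' = 2 s_Δᵀ J s'`, and the dynamics together with the control law collapse `J s'` to
`-ω × (J̃ ω) + f̃ + d - J̃ (ω_d' - λ sgn₊(q_e°) q⃗_e') - K∘sat(s/Φ)`. Since
`s_Δ,ᵢ · sat (sᵢ / Φᵢ) = |s_Δ,ᵢ|`, the gain condition bounds the `i`-th term of `s_Δᵀ J s'`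
by `-ηᵢ |s_Δ,ᵢ|`.
-/

/-- `s_Δ,ᵢ = deadZone Φᵢ sᵢ`. -/
def deadZone (Φ x : ℝ) : ℝ := x - Φ * sat (x / Φ)

lemma sat_of_one_le {x : ℝ} (hx : 1 ≤ x) : sat x = 1 := by
  rw [sat, min_eq_left hx, max_eq_right (by norm_num)]

lemma sat_of_le_neg_one {x : ℝ} (hx : x ≤ -1) : sat x = -1 := by
  rw [sat, min_eq_right (hx.trans (by norm_num)), max_eq_left hx]

lemma sat_of_abs_le_one {x : ℝ} (hx : |x| ≤ 1) : sat x = x := by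
  rw [sat, min_eq_right (abs_le.1 hx).2, max_eq_right (abs_le.1 hx).1]

lemma sat_eventuallyEq {a : ℝ} (ha : 1 < |a|) : ∀ᶠ y in 𝓝 a, sat y = sat a := by
  rcases lt_abs.1 ha with h | h
  · filter_upwards [lt_mem_nhds h] with y hy
    rw [sat_of_one_le hy.le, sat_of_one_le h.le]
  · have h' : a < -1 := by linarith
    filter_upwards [gt_mem_nhds h'] with y hy
    rw [sat_of_le_neg_one hy.le, sat_of_le_neg_one h'.le]

lemma sgnPlus_eventuallyEq {a : ℝ} (ha : a ≠ 0) : ∀ᶠ y in 𝓝 a, sgnPlus y = sgnPlus a := by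
  rcases ha.lt_or_gt with h | h
  · filter_upwards [gt_mem_nhds h] with y hy
    simp [sgnPlus, not_le.2 hy, not_le.2 h]
  · filter_upwards [lt_mem_nhds h] with y hy
    simp [sgnPlus, hy.le, h.le]

lemma deadZone_mul_sat_eq_abs {Φ : ℝ} (hΦ : 0 < Φ) (x : ℝ) :
    deadZone Φ x * sat (x / Φ) = |deadZone Φ x| := by
  rcases le_or_gt 1 (x / Φ) with h | h
  · have : Φ ≤ x := by rwa [le_div_iff₀ hΦ, one_mul] at h
    rw [deadZone, sat_of_one_le h, mul_one, mul_one, abs_of_nonneg (by linarith)]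
  rcases le_or_gt (x / Φ) (-1) with h' | h'
  · have : x ≤ -Φ := by rwa [div_le_iff₀ hΦ, neg_one_mul] at h'
    rw [deadZone, sat_of_le_neg_one h', abs_of_nonpos (by linarith)]
    ring
  · rw [deadZone, sat_of_abs_le_one (abs_le.2 ⟨h'.le, h.le⟩), mul_div_cancel₀ x hΦ.ne']
    simp

lemma HasDerivAt.deadZone {g : ℝ → ℝ} {g' t Φ : ℝ} (hg : HasDerivAt g g' t) (hΦ : 0 < Φ)
    (ht : Φ < |g t|) : HasDerivAt (fun τ => deadZone Φ (g τ)) g' t := by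
  have hsat : ∀ᶠ τ in 𝓝 t, sat (g τ / Φ) = sat (g t / Φ) :=
    (hg.continuousAt.div_const Φ).eventually
      (sat_eventuallyEq (by rwa [abs_div, abs_of_pos hΦ, one_lt_div hΦ]))
  refine (hg.sub_const (Φ * sat (g t / Φ))).congr_of_eventuallyEq ?_
  filter_upwards [hsat] with τ hτ
  rw [_root_.deadZone, hτ]

lemma differentiable_vecPart : Differentiable ℝ vecPart :=
  differentiable_pi.2 fun i => by
    fin_cases i
    · exact (⟨QuaternionAlgebra.imIₗ (-1 : ℝ) 0 (-1), Quaternion.continuous_imI⟩ :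
        Quaternion ℝ →L[ℝ] ℝ).differentiable
    · exact (⟨QuaternionAlgebra.imJₗ (-1 : ℝ) 0 (-1), Quaternion.continuous_imJ⟩ :
        Quaternion ℝ →L[ℝ] ℝ).differentiable
    · exact (⟨QuaternionAlgebra.imKₗ (-1 : ℝ) 0 (-1), Quaternion.continuous_imK⟩ :
        Quaternion ℝ →L[ℝ] ℝ).differentiable

lemma HasDerivAt.dotProduct_mulVec_self {n : Type*} [Fintype n] {A : Matrix n n ℝ}
    (hA : A.IsSymm) {x : ℝ → n → ℝ} {x' : n → ℝ} {t : ℝ} (hx : HasDerivAt x x' t) :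
    HasDerivAt (fun τ => x τ ⬝ᵥ (A *ᵥ x τ)) (2 * (x t ⬝ᵥ (A *ᵥ x'))) t := by
  have hcomp := hasDerivAt_pi.1 hx
  have h : HasDerivAt (fun τ => ∑ i, x τ i * ∑ j, A i j * x τ j)
      (∑ i, (x' i * ∑ j, A i j * x t j + x t i * ∑ j, A i j * x' j)) t :=
    HasDerivAt.fun_sum fun i _ =>
      (hcomp i).mul (HasDerivAt.fun_sum fun j _ => (hcomp j).const_mul (A i j))
  have hswap : x' ⬝ᵥ (A *ᵥ x t) = x t ⬝ᵥ (A *ᵥ x') := by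
    rw [dotProduct_mulVec, ← mulVec_transpose, hA.eq, dotProduct_comm]
  convert h using 1
  · rfl
  rw [Finset.sum_add_distrib]
  change _ = x' ⬝ᵥ (A *ᵥ x t) + x t ⬝ᵥ (A *ᵥ x')
  rw [hswap, two_mul]

lemma abs_mulVec_apply_le {m n : Type*} [Fintype n] {A B : Matrix m n ℝ}
    (hAB : ∀ i j, |A i j| ≤ B i j) (v : n → ℝ) (i : m) :
    |(A *ᵥ v) i| ≤ (B *ᵥ fun j => |v j|) i :=
  calc |∑ j, A i j * v j| ≤ ∑ j, |A i j * v j| := Finset.abs_sum_le_sum_abs _ _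
    _ ≤ ∑ j, B i j * |v j| := Finset.sum_le_sum fun j _ => by
      rw [abs_mul]
      exact mul_le_mul_of_nonneg_right (hAB i j) (abs_nonneg _)

lemma abs_neg_add_add_sub_mulVec_apply_le {m n : Type*} [Fintype n] {A B : Matrix m n ℝ}
    (hAB : ∀ i j, |A i j| ≤ B i j) (a b c : m → ℝ) (u : n → ℝ) (i : m) :
    |(-a + b + c - A *ᵥ u) i| ≤ |a i| + (B *ᵥ fun j => |u j|) i + |b i| + |c i| := by
  have h := abs_mulVec_apply_le hAB u i
  simp only [Pi.sub_apply, Pi.add_apply, Pi.neg_apply]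
  rw [abs_le]
  constructor <;> linarith [le_abs_self (a i), neg_abs_le (a i), le_abs_self (b i),
    neg_abs_le (b i), le_abs_self (c i), neg_abs_le (c i), le_abs_self ((A *ᵥ u) i),
    neg_abs_le ((A *ᵥ u) i)]

lemma closed_loop_mulVec_eq {J Jhat Jtil : Matrix (Fin 3) (Fin 3) ℝ} (hJ : J = Jhat + Jtil)
    {ω ω' ωd' q' f fhat ftil d k Mb : Fin 3 → ℝ} {c : ℝ} (hf : f = fhat + ftil)
    (hMb : Mb = Jhat *ᵥ ωd' + ω ⨯₃ (Jhat *ᵥ ω) - fhat - c • (Jhat *ᵥ q') - k)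
    (hdyn : J *ᵥ ω' = -(ω ⨯₃ (J *ᵥ ω)) + f + Mb + d) :
    J *ᵥ (ω' - ωd' + c • q') =
      -(ω ⨯₃ (Jtil *ᵥ ω)) + ftil + d - Jtil *ᵥ (ωd' - c • q') - k := by
  subst hJ hf hMb
  simp only [add_mulVec, mulVec_add, mulVec_sub, mulVec_smul, map_add] at hdyn ⊢
  linear_combination (norm := module) hdyn

lemma mul_sub_mul_le_neg_mul_abs {e σ a k η : ℝ} (hσ : e * σ = |e|) (ha : |a| ≤ k - η) :
    e * (a - k * σ) ≤ -(η * |e|) := by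
  have hea : e * a ≤ |e| * (k - η) := by
    calc e * a ≤ |e * a| := le_abs_self _
      _ = |e| * |a| := abs_mul _ _
      _ ≤ |e| * (k - η) := mul_le_mul_of_nonneg_left ha (abs_nonneg e)
  calc e * (a - k * σ) = e * a - k * (e * σ) := by ring
    _ ≤ -(η * |e|) := by rw [hσ]; linarith

theorem robust_sliding_control_differential_inequality_general
    (J Jhat Jtil calJ : Matrix (Fin 3) (Fin 3) ℝ)
    (hJ : J = Jhat + Jtil) (hJsymm : J.IsSymm)
    (hJtil : ∀ i j, |Jtil i j| ≤ calJ i j)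
    (lam : ℝ)
    (Φ η K : Fin 3 → ℝ) (hΦ : ∀ i, 0 < Φ i)
    (ω ωd : ℝ → Fin 3 → ℝ) (hω : Differentiable ℝ ω) (hωd : Differentiable ℝ ωd)
    (f fhat ftil d : ℝ → Fin 3 → ℝ) (F : ℝ → Fin 3 → ℝ) (D : Fin 3 → ℝ)
    (hf : ∀ τ : ℝ, f τ = fhat τ + ftil τ)
    (hftil : ∀ (τ : ℝ) (i : Fin 3), |ftil τ i| ≤ F τ i)
    (hd : ∀ (τ : ℝ) (i : Fin 3), |d τ i| ≤ D i)
    (qe : ℝ → Quaternion ℝ) (hqe : Differentiable ℝ qe)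
    (s sΔ : ℝ → Fin 3 → ℝ)
    (hs : ∀ τ : ℝ, s τ = ω τ - ωd τ + (lam * sgnPlus (qe τ).re) • vecPart (qe τ))
    (hsΔ : ∀ (τ : ℝ) (i : Fin 3), sΔ τ i = s τ i - Φ i * sat (s τ i / Φ i))
    (t : ℝ) (hre : (qe t).re ≠ 0) (houter : ∀ i, Φ i < |s t i|)
    (Mb : ℝ → Fin 3 → ℝ)
    (hMb : ∀ τ : ℝ, Mb τ =
      Jhat *ᵥ deriv ωd τ + ω τ ⨯₃ (Jhat *ᵥ ω τ) - fhat τ -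
        (lam * sgnPlus (qe τ).re) • (Jhat *ᵥ deriv (fun σ => vecPart (qe σ)) τ) -
        (fun i => K i * sat (s τ i / Φ i)))
    (hdyn : ∀ᶠ τ in 𝓝 t,
      J *ᵥ deriv ω τ = -(ω τ ⨯₃ (J *ᵥ ω τ)) + f τ + Mb τ + d τ)
    (hgain : ∀ i,
      |(ω t ⨯₃ (Jtil *ᵥ ω t)) i| +
        (calJ *ᵥ fun j =>
          |deriv ωd t j - lam * sgnPlus (qe t).re *
            deriv (fun σ => vecPart (qe σ)) t j|) i +
        F t i + D i + η i ≤ K i) :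
    DifferentiableAt ℝ (fun τ => sΔ τ ⬝ᵥ (J *ᵥ sΔ τ)) t ∧
      deriv (fun τ => sΔ τ ⬝ᵥ (J *ᵥ sΔ τ)) t ≤ -2 * ∑ i, η i * |sΔ t i| := by
  set c := sgnPlus (qe t).re
  set q' := deriv (fun σ => vecPart (qe σ)) t
  have hc : ∀ᶠ τ in 𝓝 t, sgnPlus (qe τ).re = c :=
    (Quaternion.continuous_re.comp hqe.continuous).continuousAt.eventually
      (sgnPlus_eventuallyEq hre)
  have hsd : HasDerivAt s (deriv ω t - deriv ωd t + (lam * c) • q') t := by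
    have hq := ((differentiable_vecPart.comp hqe) t).hasDerivAt
    refine (((hω t).hasDerivAt.sub (hωd t).hasDerivAt).add
      (hq.const_smul (lam * c))).congr_of_eventuallyEq ?_
    filter_upwards [hc] with τ hτ
    rw [hs τ, hτ]
    rfl
  obtain rfl : sΔ = fun τ i => deadZone (Φ i) (s τ i) := funext₂ hsΔ
  have hV := (hasDerivAt_pi.2 fun i => (hasDerivAt_pi.1 hsd i).deadZone (hΦ i) (houter i)
    ).dotProduct_mulVec_self hJsymm
  refine ⟨hV.differentiableAt, ?_⟩
  rw [hV.deriv, closed_loop_mulVec_eq hJ (hf t) (hMb t) hdyn.self_of_nhds]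
  set u := deriv ωd t - (lam * c) • q'
  set A := -(ω t ⨯₃ (Jtil *ᵥ ω t)) + ftil t + d t - Jtil *ᵥ u
  have hA : ∀ i, |A i| ≤ K i - η i := fun i => by
    have hu : (fun j => |u j|) = fun j => |deriv ωd t j - lam * c * q' j| := rfl
    have := abs_neg_add_add_sub_mulVec_apply_le hJtil (ω t ⨯₃ (Jtil *ᵥ ω t)) (ftil t) (d t) u i
    rw [hu] at this
    linarith [hgain i, hftil t i, hd t i]
  calc 2 * (_ ⬝ᵥ (A - _))
      = 2 * ∑ i, deadZone (Φ i) (s t i) * (A i - K i * sat (s t i / Φ i)) := rfl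
    _ ≤ 2 * ∑ i, -(η i * |deadZone (Φ i) (s t i)|) := by
      gcongr with i
      exact mul_sub_mul_le_neg_mul_abs (deadZone_mul_sat_eq_abs (hΦ i) (s t i)) (hA i)
    _ = -2 * ∑ i, η i * |deadZone (Φ i) (s t i)| := by
      rw [Finset.sum_neg_distrib]
      ring

theorem robust_sliding_control_differential_inequality
    (J Jhat Jtil calJ : Matrix (Fin 3) (Fin 3) ℝ)
    (hJ : J = Jhat + Jtil) (hJsymm : J.IsSymm) (hJpos : J.PosDef)
    (hJtil : ∀ i j, |Jtil i j| ≤ calJ i j)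
    (lam : ℝ) (hlam : 0 < lam)
    (Φ η K : Fin 3 → ℝ) (hΦ : ∀ i, 0 < Φ i) (hη : ∀ i, 0 < η i)
    (ω ωd : ℝ → Fin 3 → ℝ) (hω : Differentiable ℝ ω) (hωd : Differentiable ℝ ωd)
    (f fhat ftil d : ℝ → Fin 3 → ℝ) (F : ℝ → Fin 3 → ℝ) (D : Fin 3 → ℝ)
    (hf : ∀ τ : ℝ, f τ = fhat τ + ftil τ)
    (hftil : ∀ (τ : ℝ) (i : Fin 3), |ftil τ i| ≤ F τ i)
    (hd : ∀ (τ : ℝ) (i : Fin 3), |d τ i| ≤ D i)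
    (qe : ℝ → Quaternion ℝ) (hqe : Differentiable ℝ qe)
    (hunit : ∀ τ : ℝ, ‖qe τ‖ = 1)
    (hkin : ∀ τ : ℝ, deriv qe τ = (1 / 2 : ℝ) • (qe τ * quatOfVec (ω τ - ωd τ)))
    (s sΔ : ℝ → Fin 3 → ℝ)
    (hs : ∀ τ : ℝ, s τ = ω τ - ωd τ + (lam * sgnPlus (qe τ).re) • vecPart (qe τ))
    (hsΔ : ∀ (τ : ℝ) (i : Fin 3), sΔ τ i = s τ i - Φ i * sat (s τ i / Φ i))
    (t : ℝ) (hre : (qe t).re ≠ 0) (houter : ∀ i, Φ i < |s t i|)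
    (Mb : ℝ → Fin 3 → ℝ)
    (hMb : ∀ τ : ℝ, Mb τ =
      Jhat *ᵥ deriv ωd τ + ω τ ⨯₃ (Jhat *ᵥ ω τ) - fhat τ -
        (lam * sgnPlus (qe τ).re) • (Jhat *ᵥ deriv (fun σ => vecPart (qe σ)) τ) -
        (fun i => K i * sat (s τ i / Φ i)))
    (hdyn : ∀ᶠ τ in 𝓝 t,
      J *ᵥ deriv ω τ = -(ω τ ⨯₃ (J *ᵥ ω τ)) + f τ + Mb τ + d τ)
    (hgain : ∀ i,
      |(ω t ⨯₃ (Jtil *ᵥ ω t)) i| +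
        (calJ *ᵥ fun j =>
          |deriv ωd t j - lam * sgnPlus (qe t).re *
            deriv (fun σ => vecPart (qe σ)) t j|) i +
        F t i + D i + η i ≤ K i) :
    DifferentiableAt ℝ (fun τ => sΔ τ ⬝ᵥ (J *ᵥ sΔ τ)) t ∧
      deriv (fun τ => sΔ τ ⬝ᵥ (J *ᵥ sΔ τ)) t ≤ -2 * ∑ i, η i * |sΔ t i| :=
  robust_sliding_control_differential_inequality_general J Jhat Jtil calJ hJ hJsymm hJtil lam Φ η K
    hΦ ω ωd hω hωd f fhat ftil d F D hf hftil hd qe hqe s sΔ hs hsΔ t hre houter Mb hMb hdyn hgain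
end
end
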